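/- arXiv:2411.03574 — 6 statements merged into one kernel-verified Lean document; each statement's English description precedes it below -/
import Mathlib

section
/- Let α = s + it with s > 0 and t ∈ ℝ. Then there is a constant K (independent of q and n) such that |(q^α; q)_n| ≤ K (q^s; q)_n for all q ∈ (0,1) and n ∈ ℕ. -/
open Complex Finset

/-! Write `r = q ^ x` and `θ = t log q`, so that `q ^ (x + i t) = r e^{iθ}`. Then
`‖1 - r e^{iθ}‖² = (1 - r)² + 2 r (1 - cos θ) ≤ (1 - r)² + r θ²`, and `r (x log q)² ≤ (1 - r)²`
(this is `|u| ≤ 2 |sinh (u / 2)|` for `u = x log q`), so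
`‖1 - q ^ (x + i t)‖ ≤ √(1 + (t / x)²) |1 - q ^ x| ≤ exp ((t / x)² / 2) |1 - q ^ x|`.
Taking `x = s + k` and multiplying over `k < n`, the exponents add up to at most
`t² / 2 · ∑ 1 / (s + k)² ≤ t² / 2 · (1 / s + 1 / s²)`, independently of `q` and `n`. -/

/-- Complex q-Pochhammer symbol `(a;q)_n = ∏_{k=0}^{n-1} (1 - a q^k)`. -/
noncomputable def qPochC (a q : ℂ) (n : ℕ) : ℂ := ∏ k ∈ range n, (1 - a * q ^ k)

/-- Real q-Pochhammer symbol. -/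
noncomputable def qPochR (a q : ℝ) (n : ℕ) : ℝ := ∏ k ∈ range n, (1 - a * q ^ k)

namespace Real

theorem exp_mul_sq_le_one_sub_exp_sq (u : ℝ) : exp u * u ^ 2 ≤ (1 - exp u) ^ 2 := by
  have hsinh : u ^ 2 ≤ (2 * sinh (u / 2)) ^ 2 := by
    rw [sq_le_sq, abs_mul, abs_sinh, abs_two, abs_div, abs_two]
    linarith [self_le_sinh_iff.2 (by positivity : 0 ≤ |u| / 2)]
  have hsq : (1 - exp u) ^ 2 = exp u * (2 * sinh (u / 2)) ^ 2 := by
    have h2 : exp u = exp (u / 2) ^ 2 := by rw [← exp_nat_mul]; ring_nf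
    rw [sinh_eq, exp_neg, h2]
    field_simp
    ring
  rw [hsq]
  exact mul_le_mul_of_nonneg_left hsinh (exp_pos u).le

end Real

theorem sum_range_one_div_add_sq_le {s : ℝ} (hs : 0 < s) (n : ℕ) :
    ∑ k ∈ range n, 1 / (s + k) ^ 2 ≤ 1 / s + 1 / s ^ 2 := by
  -- compare with the telescoping sum of `1 / ((s + k) (s + k + 1))`
  have hterm : ∀ k : ℕ, 1 / (s + k) ^ 2 ≤ (1 + 1 / s) * (1 / (s + k) - 1 / (s + (k + 1 : ℕ))) := by
    intro k
    have hrhs : (1 + 1 / s) * (1 / (s + k) - 1 / (s + (k + 1 : ℕ)))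
        = (s + 1) / (s * ((s + k) * (s + k + 1))) := by
      push_cast
      field_simp
      ring
    rw [hrhs, div_le_div_iff₀ (by positivity) (by positivity)]
    nlinarith [mul_pos hs hs]
  calc ∑ k ∈ range n, 1 / (s + k) ^ 2
      ≤ ∑ k ∈ range n, (1 + 1 / s) * (1 / (s + k) - 1 / (s + (k + 1 : ℕ))) :=
        sum_le_sum fun k _ => hterm k
    _ = (1 + 1 / s) * (1 / s - 1 / (s + n)) := by
        rw [← mul_sum, sum_range_sub' (fun k : ℕ => 1 / (s + k))]
        simp
    _ ≤ (1 + 1 / s) * (1 / s) := by gcongr; simp only [sub_le_self_iff]; positivity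
    _ = 1 / s + 1 / s ^ 2 := by ring

theorem ofReal_cpow_mk {q : ℝ} (hq : 0 < q) (x t : ℝ) :
    (q : ℂ) ^ (⟨x, t⟩ : ℂ) = ((q ^ x : ℝ) : ℂ) * exp ((Real.log q * t : ℝ) * I) := by
  rw [cpow_def_of_ne_zero (ofReal_ne_zero.2 hq.ne'), ← ofReal_log hq.le, mk_eq_add_mul_I,
    Real.rpow_def_of_pos hq, ofReal_exp, ← Complex.exp_add]
  push_cast
  ring_nf

theorem norm_one_sub_ofReal_mul_exp_sq_le {r : ℝ} (hr : 0 ≤ r) (θ : ℝ) :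
    ‖1 - (r : ℂ) * exp (θ * I)‖ ^ 2 ≤ (1 - r) ^ 2 + r * θ ^ 2 := by
  have hnorm : ‖1 - (r : ℂ) * exp (θ * I)‖ ^ 2 = (1 - r) ^ 2 + 2 * r * (1 - Real.cos θ) := by
    rw [Complex.sq_norm, normSq_apply]
    simp [exp_ofReal_mul_I_re, exp_ofReal_mul_I_im]
    nlinarith [Real.sin_sq_add_cos_sq θ]
  rw [hnorm]
  nlinarith [Real.one_sub_sq_div_two_le_cos (x := θ)]

theorem norm_one_sub_ofReal_cpow_sq_le {q : ℝ} (hq : 0 < q) {x : ℝ} (hx : x ≠ 0) (t : ℝ) :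
    ‖1 - (q : ℂ) ^ (⟨x, t⟩ : ℂ)‖ ^ 2 ≤ (1 + (t / x) ^ 2) * (1 - q ^ x) ^ 2 := by
  rw [ofReal_cpow_mk hq]
  refine (norm_one_sub_ofReal_mul_exp_sq_le (Real.rpow_nonneg hq.le x) _).trans ?_
  have hexp := Real.exp_mul_sq_le_one_sub_exp_sq (Real.log q * x)
  rw [← Real.rpow_def_of_pos hq] at hexp
  have hθ : (Real.log q * t) ^ 2 = (Real.log q * x) ^ 2 * (t / x) ^ 2 := by
    field_simp
  rw [hθ]
  nlinarith [mul_le_mul_of_nonneg_right hexp (sq_nonneg (t / x))]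

theorem norm_one_sub_ofReal_cpow_le {q : ℝ} (hq : 0 < q) {x : ℝ} (hx : x ≠ 0) (t : ℝ) :
    ‖1 - (q : ℂ) ^ (⟨x, t⟩ : ℂ)‖ ≤ Real.exp ((t / x) ^ 2 / 2) * |1 - q ^ x| := by
  rw [← sq_le_sq₀ (norm_nonneg _) (by positivity)]
  calc ‖1 - (q : ℂ) ^ (⟨x, t⟩ : ℂ)‖ ^ 2 ≤ (1 + (t / x) ^ 2) * (1 - q ^ x) ^ 2 :=
        norm_one_sub_ofReal_cpow_sq_le hq hx t
    _ ≤ Real.exp ((t / x) ^ 2) * (1 - q ^ x) ^ 2 := by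
        gcongr
        linarith [Real.add_one_le_exp ((t / x) ^ 2)]
    _ = (Real.exp ((t / x) ^ 2 / 2) * |1 - q ^ x|) ^ 2 := by
        rw [mul_pow, sq_abs, ← Real.exp_nat_mul]
        ring_nf

theorem qPochR_nonneg {a q : ℝ} (ha : a ≤ 1) (hq₀ : 0 ≤ q) (hq₁ : q ≤ 1) (n : ℕ) :
    0 ≤ qPochR a q n :=
  prod_nonneg fun k _ => sub_nonneg.2 (mul_le_one₀ ha (pow_nonneg hq₀ k) (pow_le_one₀ hq₀ hq₁))

theorem norm_qPochC_ofReal_cpow_le {q s : ℝ} (hq : 0 < q) (hs : 0 < s) (t : ℝ) (n : ℕ) :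
    ‖qPochC ((q : ℂ) ^ (⟨s, t⟩ : ℂ)) q n‖
      ≤ Real.exp (∑ k ∈ range n, (t / (s + k)) ^ 2 / 2) * |qPochR (q ^ s) q n| := by
  rw [qPochC, qPochR, norm_prod, abs_prod, Real.exp_sum, ← prod_mul_distrib]
  refine prod_le_prod (fun _ _ => norm_nonneg _) fun k _ => ?_
  have hcpow : (q : ℂ) ^ (⟨s, t⟩ : ℂ) * (q : ℂ) ^ k = (q : ℂ) ^ (⟨s + k, t⟩ : ℂ) := by
    rw [← cpow_natCast, ← cpow_add _ _ (ofReal_ne_zero.2 hq.ne')]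
    congr 1
    apply Complex.ext <;> simp
  have hrpow : q ^ s * q ^ k = q ^ (s + k) := by rw [Real.rpow_add hq, Real.rpow_natCast]
  rw [hcpow, hrpow]
  exact norm_one_sub_ofReal_cpow_le hq (by positivity) t

/-- For `α = s + it` with `s > 0`, there is `K` with `|(q^α;q)_n| ≤ K (q^s;q)_n`
for all `q ∈ (0,1)` and `n ∈ ℕ`. -/
theorem abs_qPoch_le (s t : ℝ) (hs : 0 < s) :
    ∃ K : ℝ, ∀ q : ℝ, q ∈ Set.Ioo (0:ℝ) 1 → ∀ n : ℕ,
      ‖qPochC ((q : ℂ) ^ (Complex.mk s t)) q n‖ ≤ K * qPochR (q ^ s) q n := by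
  refine ⟨Real.exp (t ^ 2 / 2 * (1 / s + 1 / s ^ 2)), ?_⟩
  rintro q ⟨hq₀, hq₁⟩ n
  have hexponent : ∑ k ∈ range n, (t / (s + k)) ^ 2 / 2 ≤ t ^ 2 / 2 * (1 / s + 1 / s ^ 2) :=
    calc ∑ k ∈ range n, (t / (s + k)) ^ 2 / 2 = t ^ 2 / 2 * ∑ k ∈ range n, 1 / (s + k) ^ 2 := by
          rw [mul_sum]
          exact sum_congr rfl fun k _ => by rw [div_pow]; ring
      _ ≤ t ^ 2 / 2 * (1 / s + 1 / s ^ 2) := by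
          gcongr
          exact sum_range_one_div_add_sq_le hs n
  have hpoch : 0 ≤ qPochR (q ^ s) q n :=
    qPochR_nonneg (Real.rpow_le_one hq₀.le hq₁.le hs.le) hq₀.le hq₁.le n
  calc ‖qPochC ((q : ℂ) ^ (Complex.mk s t)) q n‖
      ≤ Real.exp (∑ k ∈ range n, (t / (s + k)) ^ 2 / 2) * |qPochR (q ^ s) q n| :=
        norm_qPochC_ofReal_cpow_le hq₀ hs t n
    _ ≤ Real.exp (t ^ 2 / 2 * (1 / s + 1 / s ^ 2)) * qPochR (q ^ s) q n := by
        rw [abs_of_nonneg hpoch]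
        gcongr
end

section
/- Let 0 < β ≤ α. Then (q^α; q)_n / (q^β; q)_n ≤ (α)_n / (β)_n for all q ∈ (0,1) and n ∈ ℕ. -/
open Finset

/-- Rising factorial `(α)_n = α(α+1)⋯(α+n-1)`. -/
noncomputable def pochR (α : ℝ) (n : ℕ) : ℝ := ∏ k ∈ range n, (α + k)

/-!
Both sides are products of factor ratios, `(1 - q^(α+k)) / (1 - q^(β+k))` and `(α+k) / (β+k)`,
so it suffices to compare them factor by factor. For `0 < b ≤ a` Bernoulli's inequality with
exponent `b / a ≤ 1` gives `q^b = (q^a)^(b/a) ≤ 1 - (b/a)(1 - q^a)`, i.e.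
`b (1 - q^a) ≤ a (1 - q^b)`, which is the factor inequality.
-/

namespace Real

theorem mul_one_sub_rpow_le_mul_one_sub_rpow {a b q : ℝ} (hq : 0 ≤ q) (hb : 0 ≤ b)
    (hba : b ≤ a) : b * (1 - q ^ a) ≤ a * (1 - q ^ b) := by
  rcases hb.eq_or_lt with rfl | hb₀
  · simp
  have ha : 0 < a := hb₀.trans_le hba
  have hbernoulli : (1 + (q ^ a - 1)) ^ (b / a) ≤ 1 + b / a * (q ^ a - 1) :=
    rpow_one_add_le_one_add_mul_self (by linarith [rpow_nonneg hq a])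
      (div_nonneg hb ha.le) ((div_le_one ha).mpr hba)
  have hpow : (1 + (q ^ a - 1)) ^ (b / a) = q ^ b := by
    rw [add_sub_cancel, ← rpow_mul hq, mul_div_cancel₀ b ha.ne']
  rw [hpow] at hbernoulli
  have hscaled : a * q ^ b ≤ a + b * (q ^ a - 1) := by
    have h := mul_le_mul_of_nonneg_left hbernoulli ha.le
    rwa [mul_add, mul_one, ← mul_assoc, mul_div_cancel₀ b ha.ne'] at h
  linarith

theorem one_sub_rpow_div_one_sub_rpow_le {a b q : ℝ} (hq₀ : 0 ≤ q) (hq₁ : q < 1) (hb : 0 < b)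
    (hba : b ≤ a) : (1 - q ^ a) / (1 - q ^ b) ≤ a / b := by
  have hqb : 0 < 1 - q ^ b := sub_pos.mpr (rpow_lt_one hq₀ hq₁ hb)
  rw [div_le_div_iff₀ hqb hb, mul_comm _ b]
  exact mul_one_sub_rpow_le_mul_one_sub_rpow hq₀ hb.le hba

end Real

theorem qPochR_rpow_eq_prod {q : ℝ} (hq : 0 < q) (a : ℝ) (n : ℕ) :
    qPochR (q ^ a) q n = ∏ k ∈ range n, (1 - q ^ (a + k)) := by
  refine prod_congr rfl fun k _ => ?_
  rw [Real.rpow_add hq, Real.rpow_natCast]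

/-- For `0 < β ≤ α`: `(q^α;q)_n/(q^β;q)_n ≤ (α)_n/(β)_n` for `q ∈ (0,1)`, `n ∈ ℕ`. -/
theorem qPoch_ratio_le_poch_ratio (α β : ℝ) (hβ : 0 < β) (hβα : β ≤ α) :
    ∀ q : ℝ, q ∈ Set.Ioo (0:ℝ) 1 → ∀ n : ℕ,
      qPochR (q ^ α) q n / qPochR (q ^ β) q n ≤ pochR α n / pochR β n := by
  rintro q ⟨hq₀, hq₁⟩ n
  have hα : 0 < α := hβ.trans_le hβα
  rw [qPochR_rpow_eq_prod hq₀, qPochR_rpow_eq_prod hq₀, pochR, pochR, ← prod_div_distrib,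
    ← prod_div_distrib]
  refine prod_le_prod (fun k _ => div_nonneg ?_ ?_) fun k _ =>
    Real.one_sub_rpow_div_one_sub_rpow_le hq₀.le hq₁ (by positivity) (by linarith)
  all_goals exact sub_nonneg.mpr (Real.rpow_le_one hq₀.le hq₁.le (by positivity))
end

section
/- For 0 < β ≤ α, the function f(q) = (1 - q^α)/(1 - q^β) is non-decreasing on (0,1), with limit α/β as q → 1⁻. -/
/-!
Writing `t = q ^ β` and `r = α / β ≥ 1`, the ratio `(1 - q ^ α) / (1 - q ^ β)` is the slope of the
convex function `t ↦ t ^ r` between `t` and `1`. Slopes of a convex function are monotone, and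
`q ↦ q ^ β` is monotone, which gives monotonicity; as `q → 1⁻` also `t → 1⁻`, and the slope tends
to the derivative `r` of `t ^ r` at `1`.
-/

open Real Set Filter
open scoped Topology

lemma one_sub_rpow_div_one_sub_rpow_eq_slope {α β q : ℝ} (hβ : β ≠ 0) (hq : 0 ≤ q) :
    (1 - q ^ α) / (1 - q ^ β) = slope (fun t : ℝ => t ^ (α / β)) 1 (q ^ β) := by
  rw [slope_def_field, ← rpow_mul hq, mul_div_cancel₀ _ hβ, one_rpow, ← neg_div_neg_eq,
    neg_sub, neg_sub]

lemma tendsto_slope_rpow_one (r : ℝ) : Tendsto (slope (fun t : ℝ => t ^ r) 1) (𝓝[≠] 1) (𝓝 r) := by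
  simpa using hasDerivAt_iff_tendsto_slope.mp
    (hasDerivAt_rpow_const (x := 1) (p := r) (.inl one_ne_zero))

lemma tendsto_rpow_nhdsLT_one {β : ℝ} (hβ : 0 < β) :
    Tendsto (fun q : ℝ => q ^ β) (𝓝[<] 1) (𝓝[<] 1) := by
  refine tendsto_nhdsWithin_iff.2 ⟨?_, ?_⟩
  · simpa using
      (continuousAt_rpow_const 1 β (.inl one_ne_zero)).tendsto.mono_left nhdsWithin_le_nhds
  · filter_upwards [Ioo_mem_nhdsLT zero_lt_one] with q hq using rpow_lt_one hq.1.le hq.2 hβ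

/-- For `0 < β ≤ α`, `f(q) = (1-q^α)/(1-q^β)` is non-decreasing on `(0,1)`
and tends to `α/β` as `q → 1⁻`. -/
theorem monotone_one_sub_rpow_ratio (α β : ℝ) (hβ : 0 < β) (hβα : β ≤ α) :
    MonotoneOn (fun q : ℝ => (1 - q ^ α) / (1 - q ^ β)) (Set.Ioo (0:ℝ) 1) ∧
    Tendsto (fun q : ℝ => (1 - q ^ α) / (1 - q ^ β))
      (nhdsWithin 1 (Set.Iio (1:ℝ))) (nhds (α / β)) := by
  have hslope : EqOn (fun q : ℝ => (1 - q ^ α) / (1 - q ^ β))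
      (slope (fun t : ℝ => t ^ (α / β)) 1 ∘ (· ^ β)) (Ioo 0 1) :=
    fun q hq => one_sub_rpow_div_one_sub_rpow_eq_slope hβ.ne' hq.1.le
  constructor
  · have hslope_mono := (convexOn_rpow ((one_le_div hβ).2 hβα)).slope_mono (x := 1) (by simp)
    have hpow_mono : MonotoneOn (fun q : ℝ => q ^ β) (Ioo 0 1) :=
      fun x hx y _ hxy => rpow_le_rpow hx.1.le hxy hβ.le
    refine (hslope_mono.comp hpow_mono fun q hq => ?_).congr hslope.symm
    exact ⟨rpow_nonneg hq.1.le β, (rpow_lt_one hq.1.le hq.2 hβ).ne⟩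
  · refine Tendsto.congr' (hslope.eventuallyEq_of_mem (Ioo_mem_nhdsLT zero_lt_one)).symm ?_
    exact (tendsto_slope_rpow_one _).comp
      ((tendsto_rpow_nhdsLT_one hβ).mono_right (nhdsLT_le_nhdsNE 1))
end

section
/- Let α, β ∈ ℂ with -β not a nonnegative integer, and let τ > 0. Then there exist q₀ ∈ (0,1) and a constant K such that |(q^α;q)_n| / |(q^β;q)_n| · q^{nτ} ≤ K (1+n)^{-Re(β-α)} for all q ∈ [q₀, 1) and n ∈ ℕ. -/
/-!
Write `q = e^{-t}`. Dividing the `k`-th factors gives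
`(1 - e^{-t(α+k)}) / (1 - e^{-t(β+k)}) = 1 + u_k` with `u_k = (1 - e^{-t(α-β)}) / (e^{t(β+k)} - 1)`,
and `‖1 + u‖ ≤ exp (Re u + ‖u‖² / 2)`.
Since `1/(e^w - 1) - 1/w = O(1/(1 + |w|))` for `w` near `0` or in a sector around the positive
real axis, `u_k = (α-β)/(β+k) + O(t/(1 + tk)) + O(1/k²)`, so the logarithm of the ratio is at most
`Re(α-β) H_n + O(log (1 + tn)) + O(1)`. The harmonic number `H_n` produces `(1+n)^{Re(α-β)}`, and
`O(log (1 + tn))` is absorbed by `q^{nτ} = e^{-τtn}`.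
-/

open Complex Finset

theorem sq_div_le_two_mul_div_add_sq {a b : ℝ} (ha₀ : 0 ≤ a) (ha₁ : a ≤ 1) (hb : 0 < b) :
    a ^ 2 / b ≤ 2 * (a / (1 + b)) + (a / b) ^ 2 := by
  rcases le_or_gt 1 b with hb₁ | hb₁
  · have : a ^ 2 / b ≤ 2 * (a / (1 + b)) := by
      rw [← mul_div_assoc, div_le_div_iff₀ hb (by positivity)]
      nlinarith [mul_le_mul_of_nonneg_right ha₁ ha₀]
    linarith [sq_nonneg (a / b)]
  · have : a ^ 2 / b ≤ (a / b) ^ 2 := by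
      rw [div_pow, div_le_div_iff₀ hb (by positivity)]
      nlinarith [sq_nonneg a, mul_le_mul_of_nonneg_left hb₁.le (sq_nonneg a)]
    have : 0 ≤ 2 * (a / (1 + b)) := by positivity
    linarith

theorem sum_div_one_add_mul_le_log {t : ℝ} (ht : 0 ≤ t) (n : ℕ) :
    ∑ k ∈ range n, t / (1 + t * (k + 1)) ≤ Real.log (1 + t * n) := by
  induction n with
  | zero => simp
  | succ m ih =>
    rw [sum_range_succ, Nat.cast_succ]
    have hstep : t / (1 + t * (m + 1)) ≤ Real.log (1 + t * (m + 1)) - Real.log (1 + t * m) := by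
      rw [← Real.log_div (by positivity) (by positivity)]
      refine le_trans (le_of_eq ?_) (Real.one_sub_inv_le_log_of_pos (by positivity))
      field_simp
      ring
    linarith

theorem sum_range_inv_succ_sq_le_two (n : ℕ) : ∑ k ∈ range n, 1 / ((k : ℝ) + 1) ^ 2 ≤ 2 := by
  calc ∑ k ∈ range n, 1 / ((k : ℝ) + 1) ^ 2 = ∑ i ∈ Ioo 0 (n + 1), ((i : ℝ) ^ 2)⁻¹ := by
        rw [← Ico_add_one_left_eq_Ioo, ← sum_Ico_add', range_eq_Ico]
        simp
    _ ≤ 2 := by simpa using sum_Ioo_inv_sq_le (α := ℝ) 0 (n + 1)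

theorem sum_range_div_succ_le (a : ℝ) (n : ℕ) :
    ∑ k ∈ range n, a / ((k : ℝ) + 1) ≤ a * Real.log (n + 1) + |a| := by
  have hsum : ∑ k ∈ range n, a / ((k : ℝ) + 1) = a * harmonic n := by
    simp [harmonic, mul_sum, div_eq_mul_inv]
  rw [hsum]
  rcases le_or_gt 0 a with ha | ha
  · have hlog : Real.log n ≤ Real.log (n + 1) := by
      rcases n.eq_zero_or_pos with rfl | hn
      · simp
      · exact Real.log_le_log (by positivity) (by linarith)
    nlinarith [harmonic_le_one_add_log n, abs_of_nonneg ha]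
  · have := log_add_one_le_harmonic n
    push_cast at this
    nlinarith [abs_nonneg a]

theorem mul_log_one_add_le {M τ x : ℝ} (hM : 0 < M) (hτ : 0 < τ) (hx : 0 ≤ x) :
    M * Real.log (1 + x) ≤ τ * x + τ + M * Real.log (M / τ) := by
  have h := Real.log_le_sub_one_of_pos (x := τ * (1 + x) / M) (by positivity)
  rw [Real.log_div (by positivity) hM.ne', Real.log_mul hτ.ne' (by positivity)] at h
  rw [Real.log_div hM.ne' hτ.ne']
  have := mul_le_mul_of_nonneg_left h hM.le
  have hcancel : M * (τ * (1 + x) / M) = τ * (1 + x) := by field_simp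
  rw [mul_sub M _ 1, hcancel] at this
  linarith

namespace Complex

theorem norm_one_add_le_exp (u : ℂ) : ‖1 + u‖ ≤ Real.exp (u.re + ‖u‖ ^ 2 / 2) := by
  have hsq : ‖1 + u‖ ^ 2 = 1 + (2 * u.re + ‖u‖ ^ 2) := by
    rw [Complex.sq_norm, Complex.sq_norm, normSq_apply, normSq_apply]
    simp only [add_re, one_re, add_im, one_im]
    ring
  refine (pow_le_pow_iff_left₀ (norm_nonneg _) (Real.exp_pos _).le two_ne_zero).mp ?_
  calc ‖1 + u‖ ^ 2 ≤ Real.exp (2 * u.re + ‖u‖ ^ 2) := by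
        linarith [Real.add_one_le_exp (2 * u.re + ‖u‖ ^ 2)]
    _ = Real.exp (u.re + ‖u‖ ^ 2 / 2) ^ 2 := by rw [← Real.exp_nat_mul]; ring_nf

theorem norm_le_two_mul_norm_exp_sub_one {w : ℂ} (hw : ‖w‖ ≤ 1 / 2 ∨ 2 * |w.im| ≤ w.re) :
    ‖w‖ ≤ 2 * ‖exp w - 1‖ := by
  rcases hw with hsmall | hcone
  · have hrem := norm_exp_sub_one_sub_id_le (x := w) (by linarith)
    have htri := norm_sub_le (exp w - 1) (exp w - 1 - w)
    rw [sub_sub_cancel] at htri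
    nlinarith [norm_nonneg w]
  · have hre : w.re ≤ ‖exp w - 1‖ :=
      calc w.re ≤ Real.exp w.re - 1 := by linarith [Real.add_one_le_exp w.re]
        _ = ‖exp w‖ - ‖(1 : ℂ)‖ := by rw [norm_exp, norm_one]
        _ ≤ ‖exp w - 1‖ := norm_sub_norm_le _ _
    have := norm_le_abs_re_add_abs_im w
    rw [abs_of_nonneg (by linarith [abs_nonneg w.im])] at this
    linarith [norm_nonneg (exp w - 1)]

theorem norm_inv_exp_sub_one_le {w : ℂ} (hw : w ≠ 0) (h : ‖w‖ ≤ 2 * ‖exp w - 1‖) :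
    ‖(exp w - 1)⁻¹‖ ≤ 2 / ‖w‖ := by
  have hw' : 0 < ‖w‖ := norm_pos_iff.mpr hw
  rw [norm_inv, le_div_iff₀ hw', inv_mul_le_iff₀ (by linarith), mul_comm]
  exact h

theorem norm_inv_exp_sub_one_sub_inv_le {w : ℂ} (hw : w ≠ 0) (h : ‖w‖ ≤ 2 * ‖exp w - 1‖) :
    ‖(exp w - 1)⁻¹ - w⁻¹‖ ≤ 6 / (1 + ‖w‖) := by
  have hw' : 0 < ‖w‖ := norm_pos_iff.mpr hw
  have he : exp w - 1 ≠ 0 := norm_pos_iff.mp (by linarith)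
  rcases le_or_gt ‖w‖ 1 with hsmall | hbig
  · have heq : (exp w - 1)⁻¹ - w⁻¹ = -(exp w - 1 - w) / ((exp w - 1) * w) := by
      field_simp
      ring
    rw [heq, norm_div, norm_neg, norm_mul, div_le_div_iff₀ (by positivity) (by positivity)]
    have := norm_exp_sub_one_sub_id_le hsmall
    nlinarith [norm_nonneg (exp w - 1 - w)]
  · calc ‖(exp w - 1)⁻¹ - w⁻¹‖ ≤ ‖(exp w - 1)⁻¹‖ + ‖w⁻¹‖ := norm_sub_le _ _
      _ ≤ 2 / ‖w‖ + 1 / ‖w‖ := by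
          rw [norm_inv w, inv_eq_one_div ‖w‖]
          gcongr
          exact norm_inv_exp_sub_one_le hw h
      _ ≤ 6 / (1 + ‖w‖) := by
          rw [← add_div, div_le_div_iff₀ hw' (by positivity)]
          linarith

theorem one_sub_exp_neg_add_eq {w : ℂ} (x : ℂ) (hw : exp w - 1 ≠ 0) :
    1 - exp (-(w + x)) = (1 - exp (-w)) * (1 + (1 - exp (-x)) / (exp w - 1)) := by
  rw [neg_add, exp_add, exp_neg, exp_neg]
  field_simp
  ring

theorem norm_one_sub_exp_neg_div_exp_sub_one_sub_div_le {w x : ℂ} (hw : w ≠ 0)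
    (hwe : ‖w‖ ≤ 2 * ‖exp w - 1‖) (hx : ‖x‖ ≤ 1) :
    ‖(1 - exp (-x)) / (exp w - 1) - x / w‖ ≤ 2 * (‖x‖ ^ 2 / ‖w‖) + 6 * (‖x‖ / (1 + ‖w‖)) := by
  have heq : (1 - exp (-x)) / (exp w - 1) - x / w =
      -(exp (-x) - 1 - -x) * (exp w - 1)⁻¹ + x * ((exp w - 1)⁻¹ - w⁻¹) := by
    ring
  have h₁ := norm_exp_sub_one_sub_id_le (x := -x) (by rwa [norm_neg])
  rw [norm_neg] at h₁
  have h₂ := norm_inv_exp_sub_one_le hw hwe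
  have h₃ := norm_inv_exp_sub_one_sub_inv_le hw hwe
  rw [heq]
  calc _ ≤ ‖x‖ ^ 2 * (2 / ‖w‖) + ‖x‖ * (6 / (1 + ‖w‖)) := by
        refine (norm_add_le _ _).trans (add_le_add ?_ ?_) <;> rw [norm_mul]
        · rw [norm_neg]
          gcongr
        · gcongr
    _ = _ := by ring

theorem norm_one_sub_exp_neg_add_le {w x : ℂ} (hw : w ≠ 0) (hwe : ‖w‖ ≤ 2 * ‖exp w - 1‖)
    (hx : ‖x‖ ≤ 1) :
    ‖1 - exp (-(w + x))‖ ≤ ‖1 - exp (-w)‖ *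
      Real.exp ((x / w).re + 10 * (‖x‖ / (1 + ‖w‖) + (‖x‖ / ‖w‖) ^ 2)) := by
  have hw' : 0 < ‖w‖ := norm_pos_iff.mpr hw
  have he : exp w - 1 ≠ 0 := norm_pos_iff.mp (by linarith)
  set u := (1 - exp (-x)) / (exp w - 1)
  have hu : ‖u‖ ≤ 4 * (‖x‖ / ‖w‖) := by
    have h₁ := norm_exp_sub_one_le (x := -x) (by rwa [norm_neg])
    rw [norm_neg, ← norm_neg, neg_sub] at h₁
    calc ‖u‖ = ‖1 - exp (-x)‖ * ‖(exp w - 1)⁻¹‖ := by rw [← norm_mul, ← div_eq_mul_inv]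
      _ ≤ 2 * ‖x‖ * (2 / ‖w‖) := by gcongr; exact norm_inv_exp_sub_one_le hw hwe
      _ = 4 * (‖x‖ / ‖w‖) := by ring
  have hux := norm_one_sub_exp_neg_div_exp_sub_one_sub_div_le hw hwe hx
  have hre : u.re ≤ (x / w).re + ‖u - x / w‖ := by
    have := re_le_norm (u - x / w)
    rw [sub_re] at this
    linarith
  have hsq := sq_div_le_two_mul_div_add_sq (norm_nonneg x) hx hw'
  calc ‖1 - exp (-(w + x))‖ = ‖1 - exp (-w)‖ * ‖1 + u‖ := by
        rw [one_sub_exp_neg_add_eq x he, norm_mul]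
    _ ≤ ‖1 - exp (-w)‖ * Real.exp (u.re + ‖u‖ ^ 2 / 2) := by
        gcongr
        exact norm_one_add_le_exp u
    _ ≤ _ := by
        gcongr ‖1 - exp (-w)‖ * Real.exp ?_
        nlinarith [norm_nonneg u]

theorem re_div_le (δ z : ℂ) {r : ℝ} (hr : 0 < r) (hz : z ≠ 0) :
    (δ / z).re ≤ δ.re / r + ‖δ‖ * ‖r - z‖ / (‖z‖ * r) := by
  have hr' : (r : ℂ) ≠ 0 := ofReal_ne_zero.mpr hr.ne'
  have heq : δ / z = δ / r + δ * (r - z) / (z * r) := by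
    field_simp
    ring
  have hre : (δ / (r : ℂ)).re = δ.re / r := by simp [div_ofReal_re]
  rw [heq, add_re, hre]
  gcongr
  calc (δ * (r - z) / (z * r)).re ≤ ‖δ * (r - z) / (z * r)‖ := re_le_norm _
    _ = ‖δ‖ * ‖r - z‖ / (‖z‖ * r) := by
      rw [norm_div, norm_mul, norm_mul, norm_real, Real.norm_of_nonneg hr.le]

end Complex

theorem exists_mul_succ_le_norm_add_nat {β : ℂ} (hβ : ∀ m : ℕ, β ≠ -(m : ℂ)) :
    ∃ c : ℝ, 0 < c ∧ c ≤ 1 ∧ ∀ k : ℕ, c * (k + 1) ≤ ‖β + k‖ := by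
  have hpos (k : ℕ) : 0 < ‖β + k‖ / (k + 1) :=
    div_pos (norm_pos_iff.mpr fun h => hβ k (eq_neg_of_add_eq_zero_left h)) (by positivity)
  obtain ⟨k₀, -, hk₀⟩ := (range (⌈2 * ‖β‖⌉₊ + 1)).exists_min_image
    (fun k : ℕ => ‖β + k‖ / (k + 1)) ⟨0, by simp⟩
  refine ⟨min (1 / 2) (‖β + k₀‖ / (k₀ + 1)), lt_min (by norm_num) (hpos k₀),
    (min_le_left _ _).trans (by norm_num), fun k => ?_⟩
  rcases lt_or_ge k (⌈2 * ‖β‖⌉₊ + 1) with hk | hk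
  · have := (min_le_right (1 / 2 : ℝ) _).trans (hk₀ k (mem_range.mpr hk))
    rwa [le_div_iff₀ (by positivity)] at this
  · have hkβ : 2 * ‖β‖ + 1 ≤ (k : ℝ) := by
      have := Nat.le_ceil (2 * ‖β‖)
      have : ((⌈2 * ‖β‖⌉₊ + 1 : ℕ) : ℝ) ≤ k := by exact_mod_cast hk
      push_cast at this
      linarith
    have htri : ‖(k : ℂ)‖ ≤ ‖β + k‖ + ‖β‖ := by simpa using norm_sub_le (β + k) β
    rw [Complex.norm_natCast] at htri
    calc min (1 / 2) (‖β + k₀‖ / (k₀ + 1)) * ((k : ℝ) + 1) ≤ 1 / 2 * (k + 1) := by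
          gcongr
          exact min_le_left _ _
      _ ≤ ‖β + k‖ := by linarith

theorem norm_mul_add_nat_le_two_mul_norm_exp_sub_one {β : ℂ} {t : ℝ} (ht : 0 ≤ t)
    (htβ : 8 * t * ‖β‖ ≤ 1) (k : ℕ) :
    ‖(t : ℂ) * (β + k)‖ ≤ 2 * ‖exp (t * (β + k)) - 1‖ := by
  apply norm_le_two_mul_norm_exp_sub_one
  rcases le_or_gt (3 * ‖β‖) (k : ℝ) with hk | hk
  · right
    rw [re_ofReal_mul, im_ofReal_mul, add_re, add_im, natCast_re, natCast_im, add_zero, abs_mul,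
      abs_of_nonneg ht]
    have him := abs_im_le_norm β
    have hre := neg_le_of_abs_le (abs_re_le_norm β)
    nlinarith
  · left
    rw [norm_mul, norm_real, Real.norm_of_nonneg ht]
    have : ‖β + k‖ ≤ ‖β‖ + k := by simpa using norm_add_le β (k : ℂ)
    nlinarith [norm_nonneg (β + k)]

theorem norm_one_sub_exp_neg_mul_add_le {z δ : ℂ} {t : ℝ} (ht : 0 < t) (hz : z ≠ 0)
    (hze : ‖(t : ℂ) * z‖ ≤ 2 * ‖exp (t * z) - 1‖) (hδ : t * ‖δ‖ ≤ 1) :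
    ‖1 - exp (-(t * (z + δ)))‖ ≤ ‖1 - exp (-(t * z))‖ *
      Real.exp ((δ / z).re + 10 * (t * ‖δ‖ / (1 + t * ‖z‖) + (‖δ‖ / ‖z‖) ^ 2)) := by
  have ht' : (t : ℂ) ≠ 0 := ofReal_ne_zero.mpr ht.ne'
  have h := norm_one_sub_exp_neg_add_le (mul_ne_zero ht' hz) hze (x := t * δ)
    (by rwa [norm_mul, norm_real, Real.norm_of_nonneg ht.le])
  rwa [← mul_add, mul_div_mul_left _ _ ht', norm_mul, norm_mul, norm_real,
    Real.norm_of_nonneg ht.le, mul_div_mul_left _ _ ht.ne'] at h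

theorem exists_norm_one_sub_exp_neg_mul_add_nat_le {α β : ℂ} (hβ : ∀ m : ℕ, β ≠ -(m : ℂ)) :
    ∃ M > 0, ∀ t : ℝ, 0 < t → t * (1 + 8 * ‖β‖ + ‖α - β‖) ≤ 1 → ∀ k : ℕ,
      ‖1 - exp (-(t * (α + k)))‖ ≤ ‖1 - exp (-(t * (β + k)))‖ *
        Real.exp ((α - β).re / (k + 1) + M * (t / (1 + t * (k + 1)) + 1 / ((k : ℝ) + 1) ^ 2)) := by
  obtain ⟨c, hc₀, hc₁, hc⟩ := exists_mul_succ_le_norm_add_nat hβ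
  set d := ‖α - β‖
  set A := d * ‖1 - β‖ / c
  set B := d / c
  refine ⟨A + 10 * B + 10 * B ^ 2 + 1, by positivity, fun t ht htL k => ?_⟩
  have hz : c * (k + 1) ≤ ‖β + k‖ := hc k
  have hz₀ : 0 < ‖β + k‖ := lt_of_lt_of_le (by positivity) hz
  have h := norm_one_sub_exp_neg_mul_add_le ht (norm_pos_iff.mp hz₀) (δ := α - β)
    (norm_mul_add_nat_le_two_mul_norm_exp_sub_one ht.le (by nlinarith [norm_nonneg (α - β)]) k)
    (by nlinarith [norm_nonneg β])
  rw [show β + k + (α - β) = α + k by ring] at h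
  refine h.trans (mul_le_mul_of_nonneg_left (Real.exp_le_exp.mpr ?_) (norm_nonneg _))
  have hre := re_div_le (α - β) (β + k) (r := k + 1) (by positivity) (norm_pos_iff.mp hz₀)
  rw [show (((k + 1 : ℝ)) : ℂ) - (β + k) = 1 - β by push_cast; ring] at hre
  have h₁ : d * ‖1 - β‖ / (‖β + k‖ * (k + 1)) ≤ A * (1 / ((k : ℝ) + 1) ^ 2) :=
    calc d * ‖1 - β‖ / (‖β + k‖ * (k + 1)) ≤ d * ‖1 - β‖ / (c * (k + 1) * (k + 1)) := by gcongr
      _ = A * (1 / ((k : ℝ) + 1) ^ 2) := by simp only [A]; field_simp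
  have h₂ : t * d / (1 + t * ‖β + k‖) ≤ B * (t / (1 + t * (k + 1))) :=
    calc t * d / (1 + t * ‖β + k‖) ≤ t * d / (c * (1 + t * (k + 1))) := by
          gcongr
          nlinarith [mul_le_mul_of_nonneg_left hz ht.le]
      _ = B * (t / (1 + t * (k + 1))) := by simp only [B]; field_simp
  have h₃ : (d / ‖β + k‖) ^ 2 ≤ B ^ 2 * (1 / ((k : ℝ) + 1) ^ 2) :=
    calc (d / ‖β + k‖) ^ 2 ≤ (d / (c * (k + 1))) ^ 2 := by gcongr
      _ = B ^ 2 * (1 / ((k : ℝ) + 1) ^ 2) := by simp only [B]; field_simp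
  have hT : 0 ≤ t / (1 + t * (k + 1)) := by positivity
  have hS : 0 ≤ 1 / ((k : ℝ) + 1) ^ 2 := by positivity
  nlinarith [mul_nonneg (by positivity : 0 ≤ A + 10 * B ^ 2 + 1) hT,
    mul_nonneg (by positivity : 0 ≤ 10 * B + 1) hS]

theorem qPochC_exp_neg (a : ℂ) (t : ℝ) (n : ℕ) :
    qPochC ((Real.exp (-t) : ℂ) ^ a) (Real.exp (-t)) n =
      ∏ k ∈ range n, (1 - exp (-(t * (a + k)))) := by
  refine prod_congr rfl fun k _ => ?_
  rw [cpow_def_of_ne_zero (ofReal_ne_zero.mpr (Real.exp_pos _).ne'),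
    ← ofReal_log (Real.exp_pos _).le, Real.log_exp, ofReal_exp, ← exp_nat_mul, ← exp_add]
  congr 2
  push_cast
  ring

theorem exists_norm_qPochC_exp_neg_div_le {α β : ℂ} (hβ : ∀ m : ℕ, β ≠ -(m : ℂ)) :
    ∃ M > 0, ∀ t : ℝ, 0 < t → t * (1 + 8 * ‖β‖ + ‖α - β‖) ≤ 1 → ∀ n : ℕ,
      ‖qPochC ((Real.exp (-t) : ℂ) ^ α) (Real.exp (-t)) n‖ /
          ‖qPochC ((Real.exp (-t) : ℂ) ^ β) (Real.exp (-t)) n‖ ≤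
        Real.exp ((α - β).re * Real.log (n + 1) + |(α - β).re| +
          M * (Real.log (1 + t * n) + 2)) := by
  obtain ⟨M, hM, hfactor⟩ := exists_norm_one_sub_exp_neg_mul_add_nat_le (α := α) hβ
  refine ⟨M, hM, fun t ht htL n => ?_⟩
  set a := (α - β).re
  have hsum : ∑ k ∈ range n, (a / (k + 1) + M * (t / (1 + t * (k + 1)) + 1 / ((k : ℝ) + 1) ^ 2))
      ≤ a * Real.log (n + 1) + |a| + M * (Real.log (1 + t * n) + 2) := by
    rw [sum_add_distrib, ← mul_sum, sum_add_distrib]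
    gcongr
    · exact sum_range_div_succ_le a n
    · exact sum_div_one_add_mul_le_log ht.le n
    · exact sum_range_inv_succ_sq_le_two n
  rw [qPochC_exp_neg, qPochC_exp_neg, norm_prod, norm_prod]
  refine div_le_of_le_mul₀ (by positivity) (by positivity) ?_
  calc ∏ k ∈ range n, ‖1 - exp (-(t * (α + k)))‖
      ≤ ∏ k ∈ range n, (‖1 - exp (-(t * (β + k)))‖ *
          Real.exp (a / (k + 1) + M * (t / (1 + t * (k + 1)) + 1 / ((k : ℝ) + 1) ^ 2))) :=
        prod_le_prod (fun _ _ => norm_nonneg _) fun k _ => hfactor t ht htL k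
    _ ≤ _ := by
        rw [prod_mul_distrib, ← Real.exp_sum, mul_comm]
        gcongr

/-- For `α, β ∈ ℂ` with `-β ∉ ℕ₀` and `τ > 0`, there exist `q₀ ∈ (0,1)` and `K` with
`|(q^α;q)_n|/|(q^β;q)_n| · q^{nτ} ≤ K (1+n)^{-Re(β-α)}` for all `q ∈ [q₀,1)`, `n ∈ ℕ`. -/
theorem qPoch_ratio_decay_complex (α β : ℂ) (hβ : ∀ m : ℕ, β ≠ -(m : ℂ)) (τ : ℝ)
    (hτ : 0 < τ) :
    ∃ q₀ ∈ Set.Ioo (0:ℝ) 1, ∃ K : ℝ, ∀ q : ℝ, q ∈ Set.Ico q₀ 1 → ∀ n : ℕ,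
      ‖qPochC ((q : ℂ) ^ α) q n‖ / ‖qPochC ((q : ℂ) ^ β) q n‖ * q ^ ((n : ℝ) * τ)
        ≤ K * (1 + (n : ℝ)) ^ (-(β - α).re) := by
  obtain ⟨M, hM, hratio⟩ := exists_norm_qPochC_exp_neg_div_le (α := α) hβ
  set L := 1 + 8 * ‖β‖ + ‖α - β‖
  set a := (α - β).re
  have hL : 0 < L := by positivity
  refine ⟨Real.exp (-L⁻¹), ⟨Real.exp_pos _, Real.exp_lt_one_iff.mpr (by simpa using hL)⟩,
    Real.exp (|a| + 2 * M + τ + M * Real.log (M / τ)), ?_⟩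
  rintro q ⟨hq₀, hq₁⟩ n
  obtain ⟨t, rfl⟩ : ∃ t, q = Real.exp (-t) :=
    ⟨-Real.log q, by rw [neg_neg, Real.exp_log ((Real.exp_pos _).trans_le hq₀)]⟩
  have ht : 0 < t := by simpa using Real.exp_lt_one_iff.mp hq₁
  have htL : t * L ≤ 1 :=
    calc t * L ≤ L⁻¹ * L := by gcongr; linarith [Real.exp_le_exp.mp hq₀]
      _ = 1 := inv_mul_cancel₀ hL.ne'
  have hlog := mul_log_one_add_le hM hτ (by positivity : 0 ≤ t * n)
  rw [← Real.exp_mul, show -(β - α).re = a by simp [a],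
    Real.rpow_def_of_pos (by positivity), ← Real.exp_add]
  calc _ ≤ Real.exp (a * Real.log (n + 1) + |a| + M * (Real.log (1 + t * n) + 2)) *
          Real.exp (-t * (n * τ)) := by
        gcongr
        exact hratio t ht htL n
    _ ≤ _ := by
        rw [← Real.exp_add, Real.exp_le_exp, add_comm 1 (n : ℝ)]
        nlinarith
end

section
/- Let q ∈ ℂ, 0 < |q| < 1, c ≠ 0, and g(x) = (cq^{-x};q)_∞ q^{x(x+1)/2} c^{-x} (principal powers). Then for every s ∈ ℂ and n ∈ ℕ, g(s+n) = (-1)^n g(s) (c^{-1}q^{1+s}; q)_n, and consequently lim_{n→∞} (-1)^n g(s+n) = g(s)(c^{-1}q^{1+s};q)_∞. -/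
/-! Raising `x` by one peels the first factor `1 - a` off `(a;q)_∞`, where `a = c q^{-x-1}`;
against the extra `q^{x+1} c^{-1}` coming from the other two factors of `g` it becomes
`-(1 - c⁻¹q^{1+x})`. Iterating gives the finite identity, and the limit is the convergence of the
partial products of `(c⁻¹q^{1+s};q)_∞`. -/

open Complex Finset Filter

/-- `g(x) = (c q^{-x};q)_∞ · q^{x(x+1)/2} · c^{-x}` with principal powers. -/
noncomputable def gfun (q c : ℂ) (x : ℂ) : ℂ :=
  (∏' k : ℕ, (1 - c * q ^ (-x) * q ^ k)) * q ^ (x * (x + 1) / 2) * c ^ (-x)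

theorem multipliable_one_sub_mul_pow (a : ℂ) {q : ℂ} (hq : ‖q‖ < 1) :
    Multipliable fun k : ℕ => 1 - a * q ^ k := by
  simpa only [sub_eq_add_neg] using
    Complex.multipliable_one_add_of_summable ((summable_geometric_of_norm_lt_one hq).mul_left a).neg

theorem tprod_one_sub_mul_pow (a : ℂ) {q : ℂ} (hq : ‖q‖ < 1) :
    ∏' k : ℕ, (1 - a * q ^ k) = (1 - a) * ∏' k : ℕ, (1 - a * q * q ^ k) := by
  have hshift : (fun k : ℕ => 1 - a * q ^ (k + 1)) = fun k => 1 - a * q * q ^ k := by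
    funext k; ring
  rw [tprod_eq_zero_mul' (hshift ▸ multipliable_one_sub_mul_pow (a * q) hq), hshift, pow_zero,
    mul_one]

theorem gfun_add_one {q c : ℂ} (hq0 : q ≠ 0) (hq1 : ‖q‖ < 1) (hc : c ≠ 0) (x : ℂ) :
    gfun q c (x + 1) = -(1 - c⁻¹ * q ^ (1 + x)) * gfun q c x := by
  have hshift : c * q ^ (-(x + 1)) * q = c * q ^ (-x) := by
    rw [mul_assoc, show -x = -(x + 1) + 1 by ring, cpow_add _ _ hq0, cpow_one]
  have hcancel : q ^ (-(x + 1)) * q ^ (1 + x) = 1 := by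
    rw [cpow_neg, add_comm 1 x, inv_mul_cancel₀ (cpow_ne_zero_iff.mpr (.inl hq0))]
  have hquad : q ^ ((x + 1) * (x + 1 + 1) / 2) = q ^ (x * (x + 1) / 2) * q ^ (1 + x) := by
    rw [← cpow_add _ _ hq0]; ring_nf
  have hlin : c ^ (-(x + 1)) = c ^ (-x) * c⁻¹ := by
    rw [neg_add, cpow_add _ _ hc, cpow_neg_one]
  unfold gfun
  rw [tprod_one_sub_mul_pow _ hq1, hshift, hquad, hlin]
  set P := ∏' k : ℕ, (1 - c * q ^ (-x) * q ^ k)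
  linear_combination
    (-(P * q ^ (x * (x + 1) / 2) * c ^ (-x))) * (c * c⁻¹ * hcancel + mul_inv_cancel₀ hc)

theorem gfun_add_nat {q c : ℂ} (hq0 : q ≠ 0) (hq1 : ‖q‖ < 1) (hc : c ≠ 0) (s : ℂ)
    (n : ℕ) :
    gfun q c (s + n)
      = (-1) ^ n * gfun q c s * ∏ k ∈ range n, (1 - c⁻¹ * q ^ (1 + s) * q ^ k) := by
  induction n with
  | zero => simp
  | succ n ih =>
    have hpow : q ^ (1 + (s + n)) = q ^ (1 + s) * q ^ n := by
      rw [← add_assoc, cpow_add _ _ hq0, cpow_natCast]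
    rw [Nat.cast_succ, ← add_assoc, gfun_add_one hq0 hq1 hc, ih, hpow, prod_range_succ]
    ring

/-- `g(s+n) = (-1)^n g(s) (c⁻¹q^{1+s};q)_n` and hence
`(-1)^n g(s+n) → g(s)(c⁻¹q^{1+s};q)_∞` as `n → ∞`. -/
theorem gfun_shift (q c : ℂ) (hq : 0 < ‖q‖) (hq1 : ‖q‖ < 1)
    (hc : c ≠ 0) (s : ℂ) :
    (∀ n : ℕ, gfun q c (s + n)
        = (-1) ^ n * gfun q c s * ∏ k ∈ range n, (1 - c⁻¹ * q ^ (1 + s) * q ^ k)) ∧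
    Tendsto (fun n : ℕ => (-1) ^ n * gfun q c (s + n)) atTop
      (nhds (gfun q c s * ∏' k : ℕ, (1 - c⁻¹ * q ^ (1 + s) * q ^ k))) := by
  have hq0 : q ≠ 0 := norm_pos_iff.mp hq
  refine ⟨gfun_add_nat hq0 hq1 hc s, ?_⟩
  have hpartial := (multipliable_one_sub_mul_pow (c⁻¹ * q ^ (1 + s)) hq1).hasProd
    |>.tendsto_prod_nat.const_mul (gfun q c s)
  refine hpartial.congr fun n => ?_
  rw [gfun_add_nat hq0 hq1 hc s n, ← mul_assoc, ← mul_assoc, ← mul_pow, neg_one_mul, neg_neg,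
    one_pow, one_mul]
end

section
/- For a ∈ ℂ \ [1,∞), as q → 1⁻ (writing q = e^{-u}), (a;q)_∞ ~ (1-a)^{1/2} exp(-u^{-1} Li₂(a)); that is, (a;q)_∞ · exp(u^{-1}Li₂(a)) · (1-a)^{-1/2} → 1 as u → 0⁺. -/
/-!
Take logarithms: `log (a; e^{-u})_∞ = ∑ₖ f(k)` with `f(t) = log (1 - a e^{-ut})`, a smooth
function of `t ≥ 0` because `1 - a r` stays in the slit plane for `r ∈ [0, 1]`. Summing the
trapezoidal rule over the intervals `[k, k+1]` gives
`∑ₖ f(k) = ∫₀^∞ f + f(0)/2 + O(∑ₖ sup_{[k,k+1]} ‖f''‖)`, and `‖f''(t)‖ ≲ u² e^{-ut}` makes the error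
`O(u)`. The substitution `r = e^{-ut}` turns `∫₀^∞ f` into `u⁻¹ ∫₀¹ log (1 - a r) / r = -Li₂(a)/u`,
while `f(0)/2 = log (1 - a) / 2` produces the factor `(1 - a)^{1/2}`.
-/

open Complex Filter

/-- The dilogarithm `Li₂(a) = -∫₀¹ log(1-at)/t dt`, giving the analytic continuation
of `Σ_{k≥1} aᵏ/k²` to `ℂ \ [1,∞)`. -/
noncomputable def Li2 (a : ℂ) : ℂ := -∫ t in (0:ℝ)..1, Complex.log (1 - a * t) / t

open MeasureTheory Set Topology Interval

section Real

variable {u t : ℝ}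

theorem exp_neg_mul_mem_Icc (hu : 0 ≤ u) (ht : 0 ≤ t) : Real.exp (-(u * t)) ∈ Icc (0 : ℝ) 1 :=
  ⟨(Real.exp_pos _).le, Real.exp_le_one_iff.mpr (neg_nonpos.mpr (mul_nonneg hu ht))⟩

theorem exp_neg_mul_natCast (k : ℕ) : Real.exp (-(u * k)) = Real.exp (-u) ^ k := by
  rw [← Real.exp_nat_mul]
  ring_nf

theorem sq_mul_inv_one_sub_exp_neg_le (hu : 0 < u) :
    u ^ 2 * (1 - Real.exp (-u))⁻¹ ≤ u * Real.exp u := by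
  have hlow : u * Real.exp (-u) ≤ 1 - Real.exp (-u) := by
    have := Real.add_one_le_exp u
    rw [Real.exp_neg]
    field_simp
    linarith
  calc u ^ 2 * (1 - Real.exp (-u))⁻¹ ≤ u ^ 2 * (u * Real.exp (-u))⁻¹ := by gcongr
    _ = u * Real.exp u := by
      rw [Real.exp_neg]
      field_simp

theorem image_exp_neg_mul_Ioi (hu : 0 < u) :
    (fun t => Real.exp (-(u * t))) '' Ioi 0 = Ioo 0 1 := by
  ext r
  constructor
  · rintro ⟨t, ht, rfl⟩
    exact ⟨Real.exp_pos _, Real.exp_lt_one_iff.mpr (by nlinarith [mem_Ioi.mp ht])⟩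
  · rintro ⟨hr0, hr1⟩
    refine ⟨-Real.log r / u, div_pos (neg_pos.mpr (Real.log_neg hr0 hr1)) hu, ?_⟩
    simp only [mul_div_cancel₀ _ hu.ne', neg_neg, Real.exp_log hr0]

end Real

section EulerMaclaurin

variable {E : Type*} [NormedAddCommGroup E] [NormedSpace ℝ E]

theorem integral_comp_exp_neg_mul_Ioi [CompleteSpace E] (g : ℝ → E) {u : ℝ} (hu : 0 < u) :
    ∫ t in Ioi 0, g (Real.exp (-(u * t))) = u⁻¹ • ∫ r in Ioo 0 1, r⁻¹ • g r := by
  have hderiv : ∀ t ∈ Ioi (0 : ℝ), HasDerivWithinAt (fun t => Real.exp (-(u * t)))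
      (Real.exp (-(u * t)) * -u) (Ioi 0) t := fun t _ =>
    (((hasDerivAt_id t).const_mul u).neg.exp.congr_deriv (by simp)).hasDerivWithinAt
  have hinj : InjOn (fun t => Real.exp (-(u * t))) (Ioi 0) := fun s _ t _ hst => by
    simpa [hu.ne'] using hst
  rw [← image_exp_neg_mul_Ioi hu,
    integral_image_eq_integral_abs_deriv_smul measurableSet_Ioi hderiv hinj, ← integral_smul]
  refine setIntegral_congr_fun measurableSet_Ioi fun t _ => ?_
  rw [smul_smul, smul_smul, abs_mul, abs_neg, abs_of_pos hu, abs_of_pos (Real.exp_pos _)]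
  rw [show u⁻¹ * (Real.exp (-(u * t)) * u) * (Real.exp (-(u * t)))⁻¹ = 1 by field_simp, one_smul]

theorem norm_trapezoid_sub_integral_le [CompleteSpace E] {f f' f'' : ℝ → E} {x M : ℝ}
    (hf : ∀ t ∈ Icc x (x + 1), HasDerivAt f (f' t) t)
    (hf' : ∀ t ∈ Icc x (x + 1), HasDerivAt f' (f'' t) t)
    (hM : ∀ t ∈ Icc x (x + 1), ‖f'' t‖ ≤ M) :
    ‖(2⁻¹ : ℝ) • (f x + f (x + 1)) - ∫ t in x..x + 1, f t‖ ≤ M / 4 := by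
  have hx : x ≤ x + 1 := by linarith
  rw [uIcc_of_le hx |>.symm] at hf hf'
  set c := x + 2⁻¹
  have hc : c ∈ Icc x (x + 1) := ⟨by norm_num [c], by norm_num [c]⟩
  have hf'_cont : ContinuousOn f' (uIcc x (x + 1)) :=
    fun t ht => (hf' t ht).continuousAt.continuousWithinAt
  -- integration by parts against `t - c`, whose integral over the interval vanishes
  have hparts : ∫ t in x..x + 1, (t - c) • f' t
      = (2⁻¹ : ℝ) • (f x + f (x + 1)) - ∫ t in x..x + 1, f t := by
    rw [intervalIntegral.integral_smul_deriv_eq_deriv_smul (u := fun t => t - c)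
      (fun t _ => (hasDerivAt_id t).sub_const c) hf intervalIntegrable_const
      hf'_cont.intervalIntegrable]
    simp only [one_smul, c]
    module
  have hmean : ∫ t in x..x + 1, (t - c) • f' c = 0 := by
    rw [intervalIntegral.integral_smul_const, intervalIntegral.integral_sub
      intervalIntegral.intervalIntegrable_id intervalIntegrable_const, integral_id,
      intervalIntegral.integral_const]
    rw [smul_eq_mul, show ((x + 1) ^ 2 - x ^ 2) / 2 - (x + 1 - x) * c = 0 by ring, zero_smul]
  have hbound : ∀ t ∈ Ι x (x + 1), ‖(t - c) • (f' t - f' c)‖ ≤ M / 4 := by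
    intro t ht
    have ht' : t ∈ Icc x (x + 1) := Ioc_subset_Icc_self (uIoc_of_le hx ▸ ht)
    have hdist : |t - c| ≤ 2⁻¹ :=
      abs_le.mpr ⟨by simp only [c]; linarith [ht'.1], by simp only [c]; linarith [ht'.2]⟩
    have hlip : ‖f' t - f' c‖ ≤ M * ‖t - c‖ :=
      (convex_Icc x (x + 1)).norm_image_sub_le_of_norm_hasDerivWithin_le
        (fun s hs => (hf' s (uIcc_of_le hx ▸ hs)).hasDerivWithinAt) hM hc ht'
    have hM0 : 0 ≤ M := (norm_nonneg _).trans (hM x ⟨le_rfl, hx⟩)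
    rw [Real.norm_eq_abs] at hlip
    rw [norm_smul, Real.norm_eq_abs]
    calc |t - c| * ‖f' t - f' c‖ ≤ 2⁻¹ * (M * 2⁻¹) := by
          gcongr
          exact hlip.trans (by gcongr)
      _ = M / 4 := by ring
  rw [← hparts, ← sub_zero (∫ t in x..x + 1, (t - c) • f' t), ← hmean,
    ← intervalIntegral.integral_sub]
  · simpa [smul_sub] using
      intervalIntegral.norm_integral_le_of_norm_le_const hbound
  · exact (((continuous_id.sub continuous_const).continuousOn).smul hf'_cont).intervalIntegrable
  · exact (((continuous_id.sub continuous_const).smul continuous_const).intervalIntegrable _ _)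

theorem sum_range_trapezoid_sub_integral {f : ℝ → E}
    (hf : ∀ k : ℕ, IntervalIntegrable f volume k (k + 1)) (N : ℕ) :
    ∑ k ∈ Finset.range N, ((2⁻¹ : ℝ) • (f k + f (k + 1)) - ∫ t in (k : ℝ)..k + 1, f t)
      = ∑ k ∈ Finset.range N, f k + (2⁻¹ : ℝ) • (f N - f 0) - ∫ t in (0 : ℝ)..N, f t := by
  induction N with
  | zero => simp
  | succ N ih =>
    have h0N : IntervalIntegrable f volume 0 N := by
      simpa using IntervalIntegrable.trans_iterate (a := Nat.cast) fun k _ => by simpa using hf k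
    rw [Finset.sum_range_succ, ih, Finset.sum_range_succ, Nat.cast_succ,
      ← intervalIntegral.integral_add_adjacent_intervals h0N (hf N)]
    module

theorem norm_tsum_sub_integral_Ioi_le [CompleteSpace E] {f f' f'' : ℝ → E} {M : ℕ → ℝ}
    (hf : ∀ t, 0 ≤ t → HasDerivAt f (f' t) t) (hf' : ∀ t, 0 ≤ t → HasDerivAt f' (f'' t) t)
    (hM : ∀ k : ℕ, ∀ t ∈ Icc (k : ℝ) (k + 1), ‖f'' t‖ ≤ M k) (hMs : Summable M)
    (hfs : Summable fun k : ℕ => f k) (hfi : IntegrableOn f (Ioi 0)) :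
    ‖∑' k : ℕ, f k - (∫ t in Ioi 0, f t) - (2⁻¹ : ℝ) • f 0‖ ≤ (∑' k, M k) / 4 := by
  have hii : ∀ x y : ℝ, 0 ≤ x → 0 ≤ y → IntervalIntegrable f volume x y := fun x y hx hy =>
    ContinuousOn.intervalIntegrable fun t ht =>
      (hf t ((le_min hx hy).trans ht.1)).continuousAt.continuousWithinAt
  have hpartial : ∀ N : ℕ, ‖∑ k ∈ Finset.range N, f k + (2⁻¹ : ℝ) • (f N - f 0)
      - ∫ t in (0 : ℝ)..N, f t‖ ≤ (∑' k, M k) / 4 := by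
    intro N
    rw [← sum_range_trapezoid_sub_integral (fun k => hii _ _ k.cast_nonneg (by positivity))]
    have hM0 : ∀ k, 0 ≤ M k := fun k => (norm_nonneg _).trans (hM k k ⟨le_rfl, by linarith⟩)
    calc _ ≤ ∑ k ∈ Finset.range N, M k / 4 := (norm_sum_le _ _).trans <|
          Finset.sum_le_sum fun k _ => norm_trapezoid_sub_integral_le
            (fun t ht => hf t (k.cast_nonneg.trans ht.1))
            (fun t ht => hf' t (k.cast_nonneg.trans ht.1)) (hM k)
      _ ≤ (∑' k, M k) / 4 := by
          rw [← Finset.sum_div]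
          gcongr
          exact hMs.sum_le_tsum _ fun k _ => hM0 k
  have hlim : Tendsto (fun N : ℕ => ∑ k ∈ Finset.range N, f k + (2⁻¹ : ℝ) • (f N - f 0)
      - ∫ t in (0 : ℝ)..N, f t) atTop
      (𝓝 (∑' k : ℕ, f k + (2⁻¹ : ℝ) • (0 - f 0) - ∫ t in Ioi 0, f t)) :=
    ((hfs.hasSum.tendsto_sum_nat.add
      ((hfs.tendsto_atTop_zero.sub tendsto_const_nhds).const_smul _)).sub
      (intervalIntegral_tendsto_integral_Ioi 0 hfi tendsto_natCast_atTop_atTop))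
  rw [show ∑' k : ℕ, f k - (∫ t in Ioi 0, f t) - (2⁻¹ : ℝ) • f 0
      = ∑' k : ℕ, f k + (2⁻¹ : ℝ) • (0 - f 0) - ∫ t in Ioi 0, f t by module]
  exact le_of_tendsto' hlim.norm hpartial

end EulerMaclaurin

/-- `logFactor a u k = log (1 - a qᵏ)` for `q = e^{-u}`, extended to real `k`. -/
noncomputable def logFactor (a : ℂ) (u t : ℝ) : ℂ := log (1 - a * Real.exp (-(u * t)))

section logFactor

variable {a : ℂ} {u c t : ℝ}

theorem one_sub_mul_ofReal_mem_slitPlane (ha : ¬(a.im = 0 ∧ 1 ≤ a.re)) {r : ℝ}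
    (hr : r ∈ Icc (0 : ℝ) 1) : 1 - a * r ∈ slitPlane := by
  rw [mem_slitPlane_iff]
  by_cases him : a.im = 0
  · have hre : a.re < 1 := lt_of_not_ge fun h => ha ⟨him, h⟩
    have hre_mul : a.re * r < 1 := by
      rcases le_or_gt a.re 0 with h | h
      · linarith [mul_nonpos_of_nonpos_of_nonneg h hr.1]
      · linarith [mul_le_of_le_one_right h.le hr.2]
    left
    simpa [him] using hre_mul
  · rcases hr.1.eq_or_lt with rfl | hr0
    · simp
    · exact Or.inr (by simp [him, hr0.ne'])

theorem exists_pos_le_norm_one_sub_mul_ofReal (ha : ¬(a.im = 0 ∧ 1 ≤ a.re)) :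
    ∃ c > 0, ∀ r ∈ Icc (0 : ℝ) 1, c ≤ ‖1 - a * r‖ := by
  obtain ⟨r₀, hr₀, hmin⟩ := isCompact_Icc.exists_isMinOn (nonempty_Icc.mpr zero_le_one)
    (f := fun r : ℝ => ‖1 - a * r‖) (by fun_prop)
  exact ⟨_, norm_pos_iff.mpr (slitPlane_ne_zero (one_sub_mul_ofReal_mem_slitPlane ha hr₀)),
    fun r hr => hmin hr⟩

theorem norm_log_one_sub_mul_ofReal_le (ha : ¬(a.im = 0 ∧ 1 ≤ a.re)) (hc0 : 0 < c)
    (hc : ∀ r ∈ Icc (0 : ℝ) 1, c ≤ ‖1 - a * r‖) {r : ℝ} (hr : r ∈ Icc (0 : ℝ) 1) :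
    ‖log (1 - a * r)‖ ≤ ‖a‖ / c * r := by
  have hderiv : ∀ s ∈ Icc (0 : ℝ) 1, HasDerivWithinAt (fun s : ℝ => log (1 - a * s))
      ((1 - a * s)⁻¹ * -a) (Icc 0 1) s := fun s hs =>
    ((hasDerivAt_log (one_sub_mul_ofReal_mem_slitPlane ha hs)).comp s
      (by simpa using ((hasDerivAt_id s).ofReal_comp.const_mul a).const_sub 1)).hasDerivWithinAt
  have hbound : ∀ s ∈ Icc (0 : ℝ) 1, ‖(1 - a * s)⁻¹ * -a‖ ≤ ‖a‖ / c := fun s hs => by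
    rw [norm_mul, norm_inv, norm_neg, inv_mul_eq_div]
    exact div_le_div_of_nonneg_left (norm_nonneg a) hc0 (hc s hs)
  simpa [abs_of_nonneg hr.1] using
    (convex_Icc (0 : ℝ) 1).norm_image_sub_le_of_norm_hasDerivWithin_le hderiv hbound
      (left_mem_Icc.mpr zero_le_one) hr

theorem hasDerivAt_mul_exp_neg_mul (a : ℂ) (u t : ℝ) :
    HasDerivAt (fun t : ℝ => a * Real.exp (-(u * t))) (-u * (a * Real.exp (-(u * t)))) t := by
  have h : HasDerivAt (fun t : ℝ => -(u * t)) (-u) t := by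
    simpa using ((hasDerivAt_id t).const_mul u).fun_neg
  exact (h.exp.ofReal_comp.const_mul a).congr_deriv (by push_cast; ring)

theorem hasDerivAt_logFactor (ha : ¬(a.im = 0 ∧ 1 ≤ a.re)) (hu : 0 ≤ u) (ht : 0 ≤ t) :
    HasDerivAt (logFactor a u)
      (u * (a * Real.exp (-(u * t))) / (1 - a * Real.exp (-(u * t)))) t := by
  have h := (hasDerivAt_log (one_sub_mul_ofReal_mem_slitPlane ha
    (exp_neg_mul_mem_Icc hu ht))).comp t ((hasDerivAt_mul_exp_neg_mul a u t).const_sub 1)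
  exact h.congr_deriv (by ring)

theorem hasDerivAt_deriv_logFactor (ha : ¬(a.im = 0 ∧ 1 ≤ a.re)) (hu : 0 ≤ u) (ht : 0 ≤ t) :
    HasDerivAt (fun t : ℝ => u * (a * Real.exp (-(u * t))) / (1 - a * Real.exp (-(u * t))))
      (-(u ^ 2 * (a * Real.exp (-(u * t)))) / (1 - a * Real.exp (-(u * t))) ^ 2) t := by
  have hne := slitPlane_ne_zero (one_sub_mul_ofReal_mem_slitPlane ha (exp_neg_mul_mem_Icc hu ht))
  have h := ((hasDerivAt_mul_exp_neg_mul a u t).const_mul (u : ℂ)).div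
    ((hasDerivAt_mul_exp_neg_mul a u t).const_sub 1) hne
  exact h.congr_deriv (by ring)

theorem norm_logFactor_le (ha : ¬(a.im = 0 ∧ 1 ≤ a.re)) (hc0 : 0 < c)
    (hc : ∀ r ∈ Icc (0 : ℝ) 1, c ≤ ‖1 - a * r‖) (hu : 0 ≤ u) (ht : 0 ≤ t) :
    ‖logFactor a u t‖ ≤ ‖a‖ / c * Real.exp (-(u * t)) :=
  norm_log_one_sub_mul_ofReal_le ha hc0 hc (exp_neg_mul_mem_Icc hu ht)

theorem norm_deriv2_logFactor_le (hc0 : 0 < c) (hc : ∀ r ∈ Icc (0 : ℝ) 1, c ≤ ‖1 - a * r‖)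
    (hu : 0 ≤ u) (ht : 0 ≤ t) :
    ‖-(u ^ 2 * (a * Real.exp (-(u * t)))) / (1 - a * Real.exp (-(u * t))) ^ 2‖
      ≤ ‖a‖ / c ^ 2 * u ^ 2 * Real.exp (-(u * t)) := by
  have hc' := hc _ (exp_neg_mul_mem_Icc hu ht)
  calc _ = u ^ 2 * (‖a‖ * Real.exp (-(u * t))) / ‖1 - a * Real.exp (-(u * t))‖ ^ 2 := by
        rw [norm_div, norm_neg, norm_pow, norm_mul, norm_mul, norm_pow, Complex.norm_real,
          Complex.norm_real, Real.norm_of_nonneg hu, Real.norm_of_nonneg (Real.exp_pos _).le]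
    _ ≤ u ^ 2 * (‖a‖ * Real.exp (-(u * t))) / c ^ 2 := by gcongr
    _ = ‖a‖ / c ^ 2 * u ^ 2 * Real.exp (-(u * t)) := by ring

theorem summable_logFactor (ha : ¬(a.im = 0 ∧ 1 ≤ a.re)) (hu : 0 < u) :
    Summable fun k : ℕ => logFactor a u k := by
  obtain ⟨c, hc0, hc⟩ := exists_pos_le_norm_one_sub_mul_ofReal ha
  refine Summable.of_norm_bounded ((summable_geometric_of_lt_one (Real.exp_pos _).le
    (Real.exp_lt_one_iff.mpr (neg_lt_zero.mpr hu))).mul_left (‖a‖ / c)) fun k => ?_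
  rw [← exp_neg_mul_natCast]
  exact norm_logFactor_le ha hc0 hc hu.le k.cast_nonneg

theorem integrableOn_logFactor (ha : ¬(a.im = 0 ∧ 1 ≤ a.re)) (hu : 0 < u) :
    IntegrableOn (logFactor a u) (Ioi 0) := by
  obtain ⟨c, hc0, hc⟩ := exists_pos_le_norm_one_sub_mul_ofReal ha
  refine Integrable.mono' ((exp_neg_integrableOn_Ioi 0 hu).const_mul (‖a‖ / c)) ?_ ?_
  · exact ContinuousOn.aestronglyMeasurable (fun t ht => (hasDerivAt_logFactor ha hu.le
      (le_of_lt ht)).continuousAt.continuousWithinAt) measurableSet_Ioi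
  · filter_upwards [ae_restrict_mem measurableSet_Ioi] with t ht
    simpa [neg_mul] using norm_logFactor_le ha hc0 hc hu.le (le_of_lt ht)

theorem integral_logFactor_Ioi (a : ℂ) (hu : 0 < u) :
    ∫ t in Ioi 0, logFactor a u t = -((u : ℂ)⁻¹ * Li2 a) := by
  rw [show logFactor a u = fun t => (fun r : ℝ => log (1 - a * r)) (Real.exp (-(u * t))) from rfl,
    integral_comp_exp_neg_mul_Ioi _ hu, Li2, intervalIntegral.integral_of_le zero_le_one,
    integral_Ioc_eq_integral_Ioo]
  simp [Complex.real_smul, div_eq_inv_mul]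

theorem norm_tsum_logFactor_sub_le (ha : ¬(a.im = 0 ∧ 1 ≤ a.re)) (hc0 : 0 < c)
    (hc : ∀ r ∈ Icc (0 : ℝ) 1, c ≤ ‖1 - a * r‖) (hu : 0 < u) :
    ‖∑' k : ℕ, logFactor a u k + (u : ℂ)⁻¹ * Li2 a - log (1 - a) / 2‖
      ≤ ‖a‖ / c ^ 2 / 4 * (u * Real.exp u) := by
  have hq : Real.exp (-u) < 1 := Real.exp_lt_one_iff.mpr (neg_lt_zero.mpr hu)
  have hM : ∀ k : ℕ, ∀ t ∈ Icc (k : ℝ) (k + 1),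
      ‖-(u ^ 2 * (a * Real.exp (-(u * t)))) / (1 - a * Real.exp (-(u * t))) ^ 2‖
        ≤ ‖a‖ / c ^ 2 * u ^ 2 * Real.exp (-u) ^ k := fun k t ht => by
    refine (norm_deriv2_logFactor_le hc0 hc hu.le (k.cast_nonneg.trans ht.1)).trans ?_
    rw [← exp_neg_mul_natCast]
    gcongr
    exact ht.1
  have h := norm_tsum_sub_integral_Ioi_le (fun t ht => hasDerivAt_logFactor ha hu.le ht)
    (fun t ht => hasDerivAt_deriv_logFactor ha hu.le ht) hM
    ((summable_geometric_of_lt_one (Real.exp_pos _).le hq).mul_left _)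
    (summable_logFactor ha hu) (integrableOn_logFactor ha hu)
  rw [integral_logFactor_Ioi a hu, tsum_mul_left, tsum_geometric_of_lt_one (Real.exp_pos _).le hq]
    at h
  calc _ = ‖∑' k : ℕ, logFactor a u k - -((u : ℂ)⁻¹ * Li2 a) - (2⁻¹ : ℝ) • logFactor a u 0‖ := by
        simp only [logFactor, mul_zero, neg_zero, Real.exp_zero,
          Complex.ofReal_one, mul_one, Complex.real_smul]
        congr 1
        push_cast
        ring
    _ ≤ ‖a‖ / c ^ 2 * u ^ 2 * (1 - Real.exp (-u))⁻¹ / 4 := h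
    _ = ‖a‖ / c ^ 2 / 4 * (u ^ 2 * (1 - Real.exp (-u))⁻¹) := by ring
    _ ≤ ‖a‖ / c ^ 2 / 4 * (u * Real.exp u) :=
        mul_le_mul_of_nonneg_left (sq_mul_inv_one_sub_exp_neg_le hu) (by positivity)

theorem tendsto_tsum_logFactor_add_sub (ha : ¬(a.im = 0 ∧ 1 ≤ a.re)) :
    Tendsto (fun u : ℝ => ∑' k : ℕ, logFactor a u k + (u : ℂ)⁻¹ * Li2 a - log (1 - a) / 2)
      (𝓝[>] 0) (𝓝 0) := by
  obtain ⟨c, hc0, hc⟩ := exists_pos_le_norm_one_sub_mul_ofReal ha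
  have hbound : Tendsto (fun u : ℝ => ‖a‖ / c ^ 2 / 4 * (u * Real.exp u)) (𝓝[>] 0) (𝓝 0) := by
    have : Continuous fun u : ℝ => ‖a‖ / c ^ 2 / 4 * (u * Real.exp u) := by fun_prop
    simpa using (this.tendsto 0).mono_left nhdsWithin_le_nhds
  exact squeeze_zero_norm' (eventually_nhdsWithin_of_forall fun u hu =>
    norm_tsum_logFactor_sub_le ha hc0 hc hu) hbound

theorem tprod_one_sub_mul_exp_neg_pow (ha : ¬(a.im = 0 ∧ 1 ≤ a.re)) (hu : 0 < u) :
    ∏' k : ℕ, (1 - a * (Real.exp (-u) : ℂ) ^ k) = exp (∑' k : ℕ, logFactor a u k) := by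
  have hfactor : ∀ k : ℕ, 1 - a * (Real.exp (-u) : ℂ) ^ k = 1 - a * Real.exp (-(u * k)) := by
    intro k
    rw [exp_neg_mul_natCast]
    push_cast
    rfl
  simp_rw [hfactor]
  exact (cexp_tsum_eq_tprod (fun k => slitPlane_ne_zero (one_sub_mul_ofReal_mem_slitPlane ha
    (exp_neg_mul_mem_Icc hu.le k.cast_nonneg))) (summable_logFactor ha hu)).symm

end logFactor

/-- For `a ∈ ℂ \ [1,∞)`, writing `q = e^{-u}`,
`(a;q)_∞ ~ (1-a)^{1/2} exp(-u⁻¹ Li₂(a))` as `u → 0⁺`. -/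
theorem qPochInf_asymptotic (a : ℂ) (ha : ¬(a.im = 0 ∧ 1 ≤ a.re)) :
    Tendsto (fun u : ℝ =>
        (∏' k : ℕ, (1 - a * (Real.exp (-u) : ℂ) ^ k))
          * Complex.exp ((u : ℂ)⁻¹ * Li2 a) * (1 - a) ^ (-(1 / 2 : ℂ)))
      (nhdsWithin 0 (Set.Ioi (0:ℝ))) (nhds 1) := by
  have h1a : (1 : ℂ) - a ≠ 0 := by
    simpa using slitPlane_ne_zero
      (one_sub_mul_ofReal_mem_slitPlane ha (right_mem_Icc.mpr zero_le_one))
  have hexp := (continuous_exp.tendsto 0).comp (tendsto_tsum_logFactor_add_sub ha)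
  rw [exp_zero] at hexp
  refine hexp.congr' (eventually_nhdsWithin_of_forall fun u hu => ?_)
  dsimp only [Function.comp_apply]
  rw [tprod_one_sub_mul_exp_neg_pow ha hu, cpow_def_of_ne_zero h1a, ← exp_add, ← exp_add]
  ring_nf
end
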